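/- Consider the gradient-push algorithm where each f_i has L-Lipschitz gradient, and let w_* ∈ ℝ^d. Define A_t := ‖w̄(t) − w_*‖ and B_t := ‖w(t) − nπ⊗w̄(t)‖_{π⊗1_d}. Then for all t ≥ 0, B_{t+1} ≤ σ_W(1 + αLδ) B_t + αLσ_W D_1[t] A_t + ασ_W D_2[t], where D_1[t] := δ‖1_n − nπ‖_π σ_W^t + (Σ_{j=1}^n 1/π_j)^{1/2} and D_2[t] := Lδ‖1_n − nπ‖_π σ_W^t ‖w_*‖ + ‖∇F(1_n⊗w_*)‖_{π⊗1_d}. -/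

import Mathlib

open Finset

/-- π-weighted norm on ℝ^n: ‖x‖_π = (Σ_j x_j²/π_j)^{1/2}. -/
noncomputable def wnorm {n : ℕ} (p : Fin n → ℝ) (x : Fin n → ℝ) : ℝ :=
  Real.sqrt (∑ j, x j ^ 2 / p j)

/-- Matrix operator norm induced by the π-weighted norm. -/
noncomputable def matNorm {n : ℕ} (p : Fin n → ℝ) (A : Matrix (Fin n) (Fin n) ℝ) : ℝ :=
  ⨆ x : {x : Fin n → ℝ // x ≠ 0}, wnorm p (A.mulVec x.1) / wnorm p x.1

/-- Block weighted norm on (ℝ^d)^n: ‖x‖_{π⊗1_d} = (Σ_j ‖x_j‖²/π_j)^{1/2}. -/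
noncomputable def bnorm {n d : ℕ} (p : Fin n → ℝ)
    (x : Fin n → EuclideanSpace ℝ (Fin d)) : ℝ :=
  Real.sqrt (∑ j, ‖x j‖ ^ 2 / p j)

/-- Blockwise action of the Kronecker product A ⊗ I_d on (ℝ^d)^n. -/
noncomputable def kron {n d : ℕ} (A : Matrix (Fin n) (Fin n) ℝ)
    (x : Fin n → EuclideanSpace ℝ (Fin d)) : Fin n → EuclideanSpace ℝ (Fin d) :=
  fun i => ∑ j, A i j • x j

/-- Operator norm of A ⊗ I_d induced by ‖·‖_{π⊗1_d}. -/
noncomputable def bopNorm {n : ℕ} (d : ℕ) (p : Fin n → ℝ)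
    (A : Matrix (Fin n) (Fin n) ℝ) : ℝ :=
  ⨆ x : {x : Fin n → EuclideanSpace ℝ (Fin d) // x ≠ 0},
    bnorm p (kron A x.1) / bnorm p x.1

/-- Euclidean norm on (ℝ^d)^n. -/
noncomputable def enormB {n d : ℕ} (x : Fin n → EuclideanSpace ℝ (Fin d)) : ℝ :=
  Real.sqrt (∑ j, ‖x j‖ ^ 2)

section helpers

variable {n d : ℕ}

lemma wnorm_nonneg (p x : Fin n → ℝ) : 0 ≤ wnorm p x := Real.sqrt_nonneg _

lemma bnorm_nonneg (p : Fin n → ℝ) (x : Fin n → EuclideanSpace ℝ (Fin d)) :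
    0 ≤ bnorm p x := Real.sqrt_nonneg _

lemma matNorm_nonneg (p : Fin n → ℝ) (A : Matrix (Fin n) (Fin n) ℝ) :
    0 ≤ matNorm p A :=
  Real.iSup_nonneg fun _ => div_nonneg (Real.sqrt_nonneg _) (Real.sqrt_nonneg _)

lemma wnorm_sq (p : Fin n → ℝ) (hp : ∀ i, 0 < p i) (x : Fin n → ℝ) :
    wnorm p x ^ 2 = ∑ j, x j ^ 2 / p j :=
  Real.sq_sqrt (Finset.sum_nonneg fun j _ => div_nonneg (sq_nonneg _) (hp j).le)

lemma wnorm_pos (p : Fin n → ℝ) (hp : ∀ i, 0 < p i) {x : Fin n → ℝ} (hx : x ≠ 0) :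
    0 < wnorm p x := by
  obtain ⟨j, hj⟩ := Function.ne_iff.mp hx
  apply Real.sqrt_pos.mpr
  apply Finset.sum_pos' (fun i _ => div_nonneg (sq_nonneg _) (hp i).le)
  refine ⟨j, Finset.mem_univ j, div_pos ?_ (hp j)⟩
  rw [← sq_abs]
  exact pow_pos (abs_pos.mpr hj) 2

lemma wnorm_mulVec_le (p : Fin n → ℝ) (hp : ∀ i, 0 < p i)
    (A : Matrix (Fin n) (Fin n) ℝ) (v : Fin n → ℝ) :
    wnorm p (A.mulVec v) ≤ matNorm p A * wnorm p v := by
  rcases eq_or_ne v 0 with rfl | hv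
  · simp only [Matrix.mulVec_zero]
    have : wnorm p (0 : Fin n → ℝ) = 0 := by
      simp [wnorm]
    rw [this, mul_zero]
  · set C2 : ℝ := ∑ i, (∑ j, A i j ^ 2 * p j) / p i with hC2
    have hC2nn : 0 ≤ C2 := Finset.sum_nonneg fun i _ =>
      div_nonneg (Finset.sum_nonneg fun j _ => mul_nonneg (sq_nonneg _) (hp j).le) (hp i).le
    have hfrob : ∀ u : Fin n → ℝ, wnorm p (A.mulVec u) ≤ Real.sqrt C2 * wnorm p u := by
      intro u
      unfold wnorm
      rw [← Real.sqrt_mul hC2nn]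
      apply Real.sqrt_le_sqrt
      have hrow : ∀ i, (A.mulVec u i) ^ 2
          ≤ (∑ j, A i j ^ 2 * p j) * (∑ j, u j ^ 2 / p j) := by
        intro i
        have h := Finset.sum_mul_sq_le_sq_mul_sq Finset.univ
          (fun j => A i j * Real.sqrt (p j)) (fun j => u j / Real.sqrt (p j))
        have e1 : ∀ j : Fin n, (A i j * Real.sqrt (p j)) * (u j / Real.sqrt (p j))
            = A i j * u j := by
          intro j
          have : Real.sqrt (p j) ≠ 0 := (Real.sqrt_pos.mpr (hp j)).ne'
          field_simp
        have e2 : ∀ j : Fin n, (A i j * Real.sqrt (p j)) ^ 2 = A i j ^ 2 * p j := by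
          intro j
          rw [mul_pow, Real.sq_sqrt (hp j).le]
        have e3 : ∀ j : Fin n, (u j / Real.sqrt (p j)) ^ 2 = u j ^ 2 / p j := by
          intro j
          rw [div_pow, Real.sq_sqrt (hp j).le]
        rw [Finset.sum_congr rfl fun j _ => e1 j, Finset.sum_congr rfl fun j _ => e2 j,
          Finset.sum_congr rfl fun j _ => e3 j] at h
        have : A.mulVec u i = ∑ j, A i j * u j := by
          simp [Matrix.mulVec, dotProduct]
        rw [this]
        exact h
      calc ∑ i, (A.mulVec u i) ^ 2 / p i
          ≤ ∑ i, ((∑ j, A i j ^ 2 * p j) * (∑ j, u j ^ 2 / p j)) / p i := by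
            refine Finset.sum_le_sum fun i _ => ?_
            exact div_le_div_of_nonneg_right (hrow i) (hp i).le
        _ = C2 * ∑ j, u j ^ 2 / p j := by
            rw [hC2, Finset.sum_mul]
            refine Finset.sum_congr rfl fun i _ => ?_
            ring
    have hbdd : BddAbove (Set.range fun x : {x : Fin n → ℝ // x ≠ 0} =>
        wnorm p (A.mulVec x.1) / wnorm p x.1) := by
      refine ⟨Real.sqrt C2, ?_⟩
      rintro r ⟨x, rfl⟩
      exact (div_le_iff₀ (wnorm_pos p hp x.2)).mpr (hfrob x.1)
    have hle : wnorm p (A.mulVec v) / wnorm p v ≤ matNorm p A := by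
      have := le_ciSup hbdd (⟨v, hv⟩ : {x : Fin n → ℝ // x ≠ 0})
      exact this
    have hpos := wnorm_pos p hp hv
    calc wnorm p (A.mulVec v) = (wnorm p (A.mulVec v) / wnorm p v) * wnorm p v := by
          field_simp
      _ ≤ matNorm p A * wnorm p v :=
          mul_le_mul_of_nonneg_right hle (wnorm_nonneg p v)

lemma euclid_norm_sq (v : EuclideanSpace ℝ (Fin d)) : ‖v‖ ^ 2 = ∑ k, v k ^ 2 := by
  rw [EuclideanSpace.norm_eq, Real.sq_sqrt (Finset.sum_nonneg fun k _ => sq_nonneg _)]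
  exact Finset.sum_congr rfl fun k _ => by rw [Real.norm_eq_abs, sq_abs]

lemma bnorm_kron_le (p : Fin n → ℝ) (hp : ∀ i, 0 < p i)
    (A : Matrix (Fin n) (Fin n) ℝ) (x : Fin n → EuclideanSpace ℝ (Fin d)) :
    bnorm p (kron A x) ≤ matNorm p A * bnorm p x := by
  have hkapp : ∀ i k, kron A x i k = A.mulVec (fun j => x j k) i := by
    intro i k
    show (∑ j, A i j • x j) k = _
    rw [WithLp.ofLp_sum, Finset.sum_apply]
    simp [Matrix.mulVec, dotProduct]
  have key : ∑ i, ‖kron A x i‖ ^ 2 / p i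
      ≤ (matNorm p A) ^ 2 * ∑ j, ‖x j‖ ^ 2 / p j := by
    calc ∑ i, ‖kron A x i‖ ^ 2 / p i
        = ∑ i, ∑ k, (kron A x i k) ^ 2 / p i := by
          refine Finset.sum_congr rfl fun i _ => ?_
          rw [euclid_norm_sq, Finset.sum_div]
      _ = ∑ k, ∑ i, (A.mulVec (fun j => x j k) i) ^ 2 / p i := by
          rw [Finset.sum_comm]
          exact Finset.sum_congr rfl fun k _ => Finset.sum_congr rfl fun i _ => by
            rw [hkapp]
      _ = ∑ k, wnorm p (A.mulVec (fun j => x j k)) ^ 2 := by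
          refine Finset.sum_congr rfl fun k _ => ?_
          rw [wnorm_sq p hp]
      _ ≤ ∑ k, (matNorm p A * wnorm p (fun j => x j k)) ^ 2 := by
          refine Finset.sum_le_sum fun k _ => ?_
          exact pow_le_pow_left₀ (wnorm_nonneg _ _) (wnorm_mulVec_le p hp A _) 2
      _ = (matNorm p A) ^ 2 * ∑ k, ∑ j, (x j k) ^ 2 / p j := by
          rw [Finset.mul_sum]
          refine Finset.sum_congr rfl fun k _ => ?_
          rw [mul_pow, wnorm_sq p hp]
      _ = (matNorm p A) ^ 2 * ∑ j, ‖x j‖ ^ 2 / p j := by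
          congr 1
          rw [Finset.sum_comm]
          refine Finset.sum_congr rfl fun j _ => ?_
          rw [euclid_norm_sq, Finset.sum_div]
  have h1 : bnorm p (kron A x) ≤ Real.sqrt ((matNorm p A) ^ 2 * ∑ j, ‖x j‖ ^ 2 / p j) :=
    Real.sqrt_le_sqrt key
  rwa [Real.sqrt_mul (sq_nonneg _), Real.sqrt_sq (matNorm_nonneg p A)] at h1

lemma bnorm_eq_norm (p : Fin n → ℝ) (hp : ∀ i, 0 < p i)
    (x : Fin n → EuclideanSpace ℝ (Fin d)) :
    bnorm p x = ‖(WithLp.equiv 2 (∀ _ : Fin n, EuclideanSpace ℝ (Fin d))).symm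
      (fun j => (Real.sqrt (p j))⁻¹ • x j)‖ := by
  rw [PiLp.norm_eq_of_L2]
  unfold bnorm
  congr 1
  refine Finset.sum_congr rfl fun j _ => ?_
  have : ‖(Real.sqrt (p j))⁻¹ • x j‖ = (Real.sqrt (p j))⁻¹ * ‖x j‖ := by
    rw [norm_smul, Real.norm_eq_abs, abs_of_nonneg (inv_nonneg.mpr (Real.sqrt_nonneg _))]
  rw [WithLp.equiv_symm_apply, PiLp.toLp_apply, this, mul_pow, inv_pow, Real.sq_sqrt (hp j).le]
  rw [div_eq_inv_mul]

lemma bnorm_add_le (p : Fin n → ℝ) (hp : ∀ i, 0 < p i)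
    (x y : Fin n → EuclideanSpace ℝ (Fin d)) :
    bnorm p (fun j => x j + y j) ≤ bnorm p x + bnorm p y := by
  rw [bnorm_eq_norm p hp, bnorm_eq_norm p hp, bnorm_eq_norm p hp]
  have : (WithLp.equiv 2 (∀ _ : Fin n, EuclideanSpace ℝ (Fin d))).symm
        (fun j => (Real.sqrt (p j))⁻¹ • (x j + y j))
      = (WithLp.equiv 2 (∀ _ : Fin n, EuclideanSpace ℝ (Fin d))).symm
        (fun j => (Real.sqrt (p j))⁻¹ • x j)
      + (WithLp.equiv 2 (∀ _ : Fin n, EuclideanSpace ℝ (Fin d))).symm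
        (fun j => (Real.sqrt (p j))⁻¹ • y j) := by
    ext j
    simp [smul_add]
  rw [this]
  exact norm_add_le _ _

lemma bnorm_neg (p : Fin n → ℝ) (x : Fin n → EuclideanSpace ℝ (Fin d)) :
    bnorm p (fun j => -(x j)) = bnorm p x := by
  unfold bnorm
  simp

lemma bnorm_sub_le (p : Fin n → ℝ) (hp : ∀ i, 0 < p i)
    (x y : Fin n → EuclideanSpace ℝ (Fin d)) :
    bnorm p (fun j => x j - y j) ≤ bnorm p x + bnorm p y := by
  have h := bnorm_add_le p hp x (fun j => -(y j))
  rw [bnorm_neg] at h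
  simpa [sub_eq_add_neg] using h

lemma bnorm_mono (p : Fin n → ℝ) (hp : ∀ i, 0 < p i)
    {x y : Fin n → EuclideanSpace ℝ (Fin d)} (h : ∀ j, ‖x j‖ ≤ ‖y j‖) :
    bnorm p x ≤ bnorm p y := by
  apply Real.sqrt_le_sqrt
  refine Finset.sum_le_sum fun j _ => ?_
  exact div_le_div_of_nonneg_right (pow_le_pow_left₀ (norm_nonneg _) (h j) 2) (hp j).le

lemma bnorm_smul (p : Fin n → ℝ) (c : ℝ) (x : Fin n → EuclideanSpace ℝ (Fin d)) :
    bnorm p (fun j => c • x j) = |c| * bnorm p x := by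
  unfold bnorm
  have : ∑ j, ‖c • x j‖ ^ 2 / p j = |c| ^ 2 * ∑ j, ‖x j‖ ^ 2 / p j := by
    rw [Finset.mul_sum]
    refine Finset.sum_congr rfl fun j _ => ?_
    rw [norm_smul, Real.norm_eq_abs, mul_pow, mul_div_assoc]
  rw [this, Real.sqrt_mul (sq_nonneg _), Real.sqrt_sq (abs_nonneg _)]

lemma bnorm_smul_const (p : Fin n → ℝ) (c : Fin n → ℝ) (v : EuclideanSpace ℝ (Fin d)) :
    bnorm p (fun j => c j • v) = wnorm p c * ‖v‖ := by
  unfold bnorm wnorm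
  have : ∑ j, ‖c j • v‖ ^ 2 / p j = (∑ j, c j ^ 2 / p j) * ‖v‖ ^ 2 := by
    rw [Finset.sum_mul]
    refine Finset.sum_congr rfl fun j _ => ?_
    rw [norm_smul, Real.norm_eq_abs, mul_pow, sq_abs]
    ring
  rw [this, Real.sqrt_mul' _ (sq_nonneg ‖v‖), Real.sqrt_sq (norm_nonneg _)]

lemma bnorm_const_le (p : Fin n → ℝ) (hp : ∀ i, 0 < p i)
    {x : Fin n → EuclideanSpace ℝ (Fin d)} {C : ℝ} (hC : 0 ≤ C)
    (h : ∀ j, ‖x j‖ ≤ C) :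
    bnorm p x ≤ C * Real.sqrt (∑ j, (p j)⁻¹) := by
  have h1 : bnorm p x ≤ Real.sqrt (∑ j, C ^ 2 * (p j)⁻¹) := by
    apply Real.sqrt_le_sqrt
    refine Finset.sum_le_sum fun j _ => ?_
    rw [div_eq_mul_inv]
    exact mul_le_mul_of_nonneg_right (pow_le_pow_left₀ (norm_nonneg _) (h j) 2)
      (inv_nonneg.mpr (hp j).le)
  rwa [← Finset.mul_sum, Real.sqrt_mul (sq_nonneg _), Real.sqrt_sq hC] at h1

lemma wnorm_negv (p x : Fin n → ℝ) : wnorm p (fun j => -(x j)) = wnorm p x := by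
  unfold wnorm
  simp

end helpers
section ylem

variable {n : ℕ}

lemma ysum_eq (W : Matrix (Fin n) (Fin n) ℝ) (hWcol : ∀ j, ∑ i, W i j = 1)
    (y : ℕ → Fin n → ℝ) (hy0 : y 0 = fun _ => 1)
    (hyrec : ∀ t, y (t + 1) = W.mulVec (y t)) : ∀ t, ∑ j, y t j = n := by
  intro t
  induction t with
  | zero => simp [hy0]
  | succ t ih =>
    rw [hyrec]
    calc ∑ i, W.mulVec (y t) i = ∑ i, ∑ j, W i j * y t j := by
          simp [Matrix.mulVec, dotProduct]
      _ = ∑ j, (∑ i, W i j) * y t j := by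
          rw [Finset.sum_comm]
          exact Finset.sum_congr rfl fun j _ => (Finset.sum_mul _ _ _).symm
      _ = ∑ j, y t j := by simp [hWcol]
      _ = n := ih

set_option maxHeartbeats 1000000 in
lemma ynorm_bound (W : Matrix (Fin n) (Fin n) ℝ) (p : Fin n → ℝ)
    (hp : ∀ i, 0 < p i) (hpsum : ∑ i, p i = 1)
    (hWcol : ∀ j, ∑ i, W i j = 1) (hWp : W.mulVec p = p)
    (y : ℕ → Fin n → ℝ) (hy0 : y 0 = fun _ => 1)
    (hyrec : ∀ t, y (t + 1) = W.mulVec (y t)) (t : ℕ) :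
    wnorm p (fun j => y t j - (n : ℝ) * p j)
      ≤ matNorm p (W - Matrix.of fun i _ => p i) ^ t
        * wnorm p (fun i => 1 - (n : ℝ) * p i) := by
  induction t with
  | zero => simp [hy0]
  | succ t ih =>
    have hsum : ∑ j, y t j = n := ysum_eq W hWcol y hy0 hyrec t
    have hstep : (fun j => y (t + 1) j - (n : ℝ) * p j)
        = (W - Matrix.of fun i _ => p i).mulVec (fun j => y t j - (n : ℝ) * p j) := by
      funext i
      rw [hyrec]
      simp only [Matrix.mulVec, dotProduct, Matrix.sub_apply, Matrix.of_apply]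
      have expand : ∀ j, (W i j - p i) * (y t j - (n : ℝ) * p j)
          = W i j * y t j - (n : ℝ) * (W i j * p j) - p i * y t j + ((n : ℝ) * p i) * p j := by
        intro j; ring
      rw [Finset.sum_congr rfl fun j _ => expand j]
      have hWpi : ∑ j, W i j * p j = p i := by
        have := congrFun hWp i
        simpa [Matrix.mulVec, dotProduct] using this
      rw [Finset.sum_add_distrib, Finset.sum_sub_distrib, Finset.sum_sub_distrib,
        ← Finset.mul_sum, ← Finset.mul_sum, ← Finset.mul_sum, hWpi, hsum, hpsum]
      ring
    rw [hstep]
    set M : Matrix (Fin n) (Fin n) ℝ := W - Matrix.of fun i _ => p i with hMdef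
    have h1 := wnorm_mulVec_le p hp M (fun j => y t j - (n : ℝ) * p j)
    have h2 : matNorm p M * wnorm p (fun j => y t j - (n : ℝ) * p j)
        ≤ matNorm p M * (matNorm p M ^ t * wnorm p (fun i => 1 - (n : ℝ) * p i)) :=
      mul_le_mul_of_nonneg_left ih (matNorm_nonneg p M)
    refine (h1.trans h2).trans (le_of_eq ?_)
    ring

end ylem

set_option maxHeartbeats 1600000

/-- In the gradient-push algorithm with L-Lipschitz gradients, the
consensus error B_t = ‖w(t) − nπ⊗w̄(t)‖_{π⊗1_d} satisfies
B_{t+1} ≤ σ_W(1+αLδ)B_t + αLσ_W D_1[t] A_t + ασ_W D_2[t]. -/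
theorem consensus_error_recursion {n d : ℕ}
    (W : Matrix (Fin n) (Fin n) ℝ)
    (hWnn : ∀ i j, 0 ≤ W i j) (hWcol : ∀ j, ∑ i, W i j = 1)
    (p : Fin n → ℝ) (hppos : ∀ i, 0 < p i) (hpsum : ∑ i, p i = 1)
    (hWp : W.mulVec p = p)
    (σW : ℝ) (hσW : σW = matNorm p (W - Matrix.of fun i _ => p i))
    (f : Fin n → EuclideanSpace ℝ (Fin d) → ℝ)
    (gf : Fin n → EuclideanSpace ℝ (Fin d) → EuclideanSpace ℝ (Fin d))
    (hgrad : ∀ i x, HasGradientAt (f i) (gf i x) x)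
    (α : ℝ) (hα : 0 < α)
    (w z : ℕ → Fin n → EuclideanSpace ℝ (Fin d))
    (y : ℕ → Fin n → ℝ)
    (hy0 : y 0 = fun _ => 1) (hz0 : z 0 = w 0)
    (hyrec : ∀ t, y (t + 1) = W.mulVec (y t))
    (hwrec : ∀ t, w (t + 1) = kron W (fun i => w t i - α • gf i (z t i)))
    (hzrec : ∀ t i, z (t + 1) i = (y (t + 1) i)⁻¹ • w (t + 1) i)
    (hypos : ∀ t i, 0 < y t i)
    (δ : ℝ) (hδ : IsLUB (Set.range fun q : ℕ × Fin n => (y q.1 q.2)⁻¹) δ)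
    (wbar : ℕ → EuclideanSpace ℝ (Fin d))
    (hwbar : ∀ t, wbar t = (n : ℝ)⁻¹ • ∑ i, w t i)
    (L : ℝ) (hlip : ∀ i x x', ‖gf i x - gf i x'‖ ≤ L * ‖x - x'‖)
    (wstar : EuclideanSpace ℝ (Fin d))
    (A B : ℕ → ℝ)
    (hA : ∀ t, A t = ‖wbar t - wstar‖)
    (hB : ∀ t, B t = bnorm p (fun i => w t i - ((n : ℝ) * p i) • wbar t))
    (t : ℕ) :
    B (t + 1)
      ≤ σW * (1 + α * L * δ) * B t
        + α * L * σW * (δ * wnorm p (fun i => 1 - (n : ℝ) * p i) * σW ^ t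
            + Real.sqrt (∑ j, (p j)⁻¹)) * A t
        + α * σW * (L * δ * wnorm p (fun i => 1 - (n : ℝ) * p i) * σW ^ t * ‖wstar‖
            + bnorm p (fun i => gf i wstar)) := by
  classical
  -- n is positive, since otherwise the sup defining δ would be over an empty set
  have hn : 0 < n := by
    by_contra h
    have hn0 : n = 0 := by omega
    subst hn0
    have hempty : (Set.range fun q : ℕ × Fin 0 => (y q.1 q.2)⁻¹) = ∅ := by
      ext r
      simp only [Set.mem_range, Set.mem_empty_iff_false, iff_false]
      rintro ⟨⟨_, i⟩, -⟩
      exact i.elim0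
    rw [hempty] at hδ
    have h1 : δ ≤ δ - 1 :=
      hδ.2 fun x hx => absurd hx (Set.notMem_empty x)
    linarith
  have hδub : ∀ s i, (y s i)⁻¹ ≤ δ := fun s i => hδ.1 ⟨(s, i), rfl⟩
  have hδpos : 0 < δ := by
    have h1 := hδub 0 ⟨0, hn⟩
    rw [hy0] at h1
    norm_num at h1
    linarith
  have hσnn : 0 ≤ σW := hσW ▸ matNorm_nonneg p _
  have hz : ∀ s i, z s i = (y s i)⁻¹ • w s i := by
    intro s i
    cases s with
    | zero => rw [hz0, hy0]; simp
    | succ s => exact hzrec s i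
  have hBt : 0 ≤ B t := (hB t) ▸ bnorm_nonneg p _
  have hAt : 0 ≤ A t := (hA t) ▸ norm_nonneg _
  rcases lt_or_ge L 0 with hL | hL
  · -- degenerate case: L < 0 forces the space to be trivial
    have hss : ∀ v : EuclideanSpace ℝ (Fin d), v = 0 := by
      intro v
      by_contra hv
      have h1 : (0 : ℝ) < ‖v - 0‖ := by
        rw [sub_zero]
        exact norm_pos_iff.mpr hv
      have h2 := hlip ⟨0, hn⟩ v 0
      have h3 := norm_nonneg (gf ⟨0, hn⟩ v - gf ⟨0, hn⟩ 0)
      nlinarith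
    have hnz : ∀ v : EuclideanSpace ℝ (Fin d), ‖v‖ = 0 := fun v => by
      rw [hss v, norm_zero]
    have hb0 : ∀ (x : Fin n → EuclideanSpace ℝ (Fin d)), bnorm p x = 0 := by
      intro x
      unfold bnorm
      simp [hnz]
    have hA0 : A t = 0 := by rw [hA, hnz]
    have hB0 : B t = 0 := by rw [hB]; exact hb0 _
    have hB1 : B (t + 1) = 0 := by rw [hB]; exact hb0 _
    rw [hA0, hB0, hB1, hb0, hnz wstar]
    ring_nf
    exact le_rfl
  · -- main case : 0 ≤ L
    have hnR : ((n : ℝ)) ≠ 0 := Nat.cast_ne_zero.mpr hn.ne'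
    set M : Matrix (Fin n) (Fin n) ℝ := W - Matrix.of fun i _ => p i with hMdef
    set g : Fin n → EuclideanSpace ℝ (Fin d) := fun j => gf j (z t j) with hgdef
    set u : Fin n → EuclideanSpace ℝ (Fin d)
      := fun j => (w t j - ((n : ℝ) * p j) • wbar t) - α • g j with hudef
    set S : ℝ := wnorm p (fun i => 1 - (n : ℝ) * p i) with hSdef
    set Q : ℝ := Real.sqrt (∑ j, (p j)⁻¹) with hQdef
    set C : ℝ := bnorm p (fun i => gf i wstar) with hCdef
    have hS : 0 ≤ S := wnorm_nonneg p _
    have hQ0 : 0 ≤ Q := Real.sqrt_nonneg _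
    have hC0 : 0 ≤ C := bnorm_nonneg p _
    -- sum of the new iterates
    have hsumw1 : ∑ i, w (t + 1) i = ∑ j, (w t j - α • g j) := by
      rw [hwrec]
      unfold kron
      rw [Finset.sum_comm]
      refine Finset.sum_congr rfl fun j _ => ?_
      rw [← Finset.sum_smul, hWcol j, one_smul]
    have hwbar1 : wbar (t + 1) = (n : ℝ)⁻¹ • ∑ j, (w t j - α • g j) := by
      rw [hwbar, hsumw1]
    -- the key consensus identity
    have hkey : (fun i => w (t + 1) i - ((n : ℝ) * p i) • wbar (t + 1))
        = kron M u := by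
      funext i
      have h1 : ((n : ℝ) * p i) • wbar (t + 1) = p i • ∑ j, (w t j - α • g j) := by
        rw [hwbar1, smul_smul]
        congr 1
        field_simp
      have h2 : w (t + 1) i = ∑ j, W i j • (w t j - α • g j) := by
        rw [hwrec]; rfl
      have h3 : ∀ j, (M i j) • u j
          = (W i j) • (w t j - α • g j) - p i • (w t j - α • g j)
            - ((W i j - p i) * ((n : ℝ) * p j)) • wbar t := by
        intro j
        simp only [hMdef, Matrix.sub_apply, Matrix.of_apply, hudef]
        module
      have h4 : ∑ j, (W i j - p i) * ((n : ℝ) * p j) = 0 := by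
        have hWpi : ∑ j, W i j * p j = p i := by
          have := congrFun hWp i
          simpa [Matrix.mulVec, dotProduct] using this
        have expand : ∀ j, (W i j - p i) * ((n : ℝ) * p j)
            = (n : ℝ) * (W i j * p j) - ((n : ℝ) * p i) * p j := by
          intro j; ring
        rw [Finset.sum_congr rfl fun j _ => expand j, Finset.sum_sub_distrib,
          ← Finset.mul_sum, ← Finset.mul_sum, hWpi, hpsum]
        ring
      show w (t + 1) i - ((n : ℝ) * p i) • wbar (t + 1) = ∑ j, _ • u j
      rw [h1, h2, Finset.sum_congr rfl fun j _ => h3 j, Finset.sum_sub_distrib,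
        Finset.sum_sub_distrib, ← Finset.sum_smul, h4, zero_smul, sub_zero,
        ← Finset.smul_sum]
      simp only [Finset.sum_sub_distrib, smul_sub, Finset.smul_sum]
    -- step 1 : contract by the operator norm
    have hstep1 : B (t + 1) ≤ σW * bnorm p u := by
      rw [hB, hkey, hσW]
      exact bnorm_kron_le p hppos _ u
    -- step 2 : split off the gradient term
    have hstep2 : bnorm p u ≤ B t + α * bnorm p g := by
      have h1 : bnorm p u ≤ bnorm p (fun j => w t j - ((n : ℝ) * p j) • wbar t)
          + bnorm p (fun j => α • g j) := bnorm_sub_le p hppos _ _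
      rw [bnorm_smul, abs_of_pos hα, ← hB] at h1
      exact h1
    -- bound the deviation of z from the average
    have hzdev : bnorm p (fun j => z t j - wbar t)
        ≤ δ * (B t + σW ^ t * S * ‖wbar t‖) := by
      have h1 : ∀ j, ‖z t j - wbar t‖ ≤ ‖δ • (w t j - y t j • wbar t)‖ := by
        intro j
        have e1 : z t j - wbar t = (y t j)⁻¹ • (w t j - y t j • wbar t) := by
          rw [hz t j, smul_sub, smul_smul, inv_mul_cancel₀ (hypos t j).ne', one_smul]
        rw [e1, norm_smul, norm_smul, Real.norm_eq_abs, Real.norm_eq_abs,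
          abs_of_nonneg (inv_nonneg.mpr (hypos t j).le), abs_of_pos hδpos]
        exact mul_le_mul_of_nonneg_right (hδub t j) (norm_nonneg _)
      have h2 : bnorm p (fun j => z t j - wbar t)
          ≤ δ * bnorm p (fun j => w t j - y t j • wbar t) := by
        have := bnorm_mono p hppos h1
        rwa [bnorm_smul, abs_of_pos hδpos] at this
      have h3 : bnorm p (fun j => w t j - y t j • wbar t)
          ≤ B t + S * σW ^ t * ‖wbar t‖ := by
        have e2 : (fun j => w t j - y t j • wbar t)
            = fun j => (w t j - ((n : ℝ) * p j) • wbar t)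
              + (((n : ℝ) * p j - y t j) • wbar t) := by
          funext j
          module
        rw [e2]
        have h4 := bnorm_add_le p hppos (fun j => w t j - ((n : ℝ) * p j) • wbar t)
          (fun j => ((n : ℝ) * p j - y t j) • wbar t)
        rw [bnorm_smul_const, ← hB] at h4
        have h5 : wnorm p (fun j => (n : ℝ) * p j - y t j) ≤ σW ^ t * S := by
          have e3 : (fun j => (n : ℝ) * p j - y t j)
              = fun j => -(y t j - (n : ℝ) * p j) := by funext j; ring
          rw [e3, wnorm_negv]
          rw [hσW, hSdef]
          exact ynorm_bound W p hppos hpsum hWcol hWp y hy0 hyrec t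
        refine h4.trans ?_
        have h6 : wnorm p (fun j => (n : ℝ) * p j - y t j) * ‖wbar t‖
            ≤ (σW ^ t * S) * ‖wbar t‖ :=
          mul_le_mul_of_nonneg_right h5 (norm_nonneg _)
        linarith
      calc bnorm p (fun j => z t j - wbar t)
          ≤ δ * bnorm p (fun j => w t j - y t j • wbar t) := h2
        _ ≤ δ * (B t + S * σW ^ t * ‖wbar t‖) :=
            mul_le_mul_of_nonneg_left h3 hδpos.le
        _ = δ * (B t + σW ^ t * S * ‖wbar t‖) := by ring
    have hwbarb : ‖wbar t‖ ≤ A t + ‖wstar‖ := by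
      rw [hA]
      calc ‖wbar t‖ = ‖(wbar t - wstar) + wstar‖ := by rw [sub_add_cancel]
        _ ≤ ‖wbar t - wstar‖ + ‖wstar‖ := norm_add_le _ _
    -- three pieces of the gradient
    have hsplit : bnorm p g
        ≤ bnorm p (fun j => gf j (z t j) - gf j (wbar t))
          + (bnorm p (fun j => gf j (wbar t) - gf j wstar) + C) := by
      have e : g = fun j => (gf j (z t j) - gf j (wbar t))
          + ((gf j (wbar t) - gf j wstar) + gf j wstar) := by
        funext j
        rw [hgdef]
        abel
      rw [e]
      refine (bnorm_add_le p hppos _ _).trans ?_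
      have := bnorm_add_le p hppos (fun j => gf j (wbar t) - gf j wstar)
        (fun j => gf j wstar)
      rw [← hCdef] at this
      linarith
    have ha : bnorm p (fun j => gf j (z t j) - gf j (wbar t))
        ≤ L * (δ * (B t + σW ^ t * S * (A t + ‖wstar‖))) := by
      have h1 : ∀ j, ‖gf j (z t j) - gf j (wbar t)‖ ≤ ‖L • (z t j - wbar t)‖ := by
        intro j
        rw [norm_smul, Real.norm_eq_abs, abs_of_nonneg hL]
        exact hlip j _ _
      have h2 : bnorm p (fun j => gf j (z t j) - gf j (wbar t))
          ≤ L * bnorm p (fun j => z t j - wbar t) := by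
        have := bnorm_mono p hppos h1
        rwa [bnorm_smul, abs_of_nonneg hL] at this
      refine h2.trans ?_
      refine mul_le_mul_of_nonneg_left ?_ hL
      refine hzdev.trans ?_
      refine mul_le_mul_of_nonneg_left ?_ hδpos.le
      have h3 : σW ^ t * S * ‖wbar t‖ ≤ σW ^ t * S * (A t + ‖wstar‖) :=
        mul_le_mul_of_nonneg_left hwbarb (mul_nonneg (pow_nonneg hσnn t) hS)
      linarith
    have hb : bnorm p (fun j => gf j (wbar t) - gf j wstar) ≤ (L * A t) * Q := by
      rw [hQdef]
      refine bnorm_const_le p hppos (mul_nonneg hL hAt) ?_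
      intro j
      rw [hA] at *
      exact hlip j _ _
    -- assemble
    have hG : bnorm p g
        ≤ L * (δ * (B t + σW ^ t * S * (A t + ‖wstar‖))) + ((L * A t) * Q + C) := by
      refine hsplit.trans ?_
      have := add_le_add ha (add_le_add_right hb C)
      linarith
    have hu2 : bnorm p u
        ≤ B t + α * (L * (δ * (B t + σW ^ t * S * (A t + ‖wstar‖)))
            + ((L * A t) * Q + C)) := by
      refine hstep2.trans ?_
      have := mul_le_mul_of_nonneg_left hG hα.le
      linarith
    have hfinal : B (t + 1)
        ≤ σW * (B t + α * (L * (δ * (B t + σW ^ t * S * (A t + ‖wstar‖)))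
            + ((L * A t) * Q + C))) :=
      hstep1.trans (mul_le_mul_of_nonneg_left hu2 hσnn)
    refine hfinal.trans (le_of_eq ?_)
    ring
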